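/- Let W : GL⁺(2) → ℝ be objective, isotropic and isochoric, and let h : (0,∞) → ℝ be defined by h(t) = W(diag(t,1)). Then the following are equivalent: (i) W is polyconvex; (ii) W is rank-one convex; (iii) h is convex on (0,∞); (iv) h is convex and non-decreasing on [1,∞). -/

import Mathlib

/-!
Writing `F` as `u ↦ z u + w ū` on `ℂ ≅ ℝ²`, rotations act on `z` and `w` by unit factors, so
`F` is rotated to `diag(|z| + |w|, |z| - |w|)`, whose entries are the singular values
`λ₁ ≥ λ₂ > 0` of `F`. By scaling, `W F = h(λ₁ / λ₂) = h(λ₁² / det F)`, and swapping the axes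
gives `h t = h t⁻¹`.

(i) ⇒ (ii) because `det` is affine along rank-one lines; (ii) ⇒ (iii) because `diag(x, 1)` and
`diag(y, 1)` differ by a rank-one matrix; (iii) ⇒ (iv) because a convex `h` with `h t = h t⁻¹`
is minimal at `1`. For (iv) ⇒ (i), `λ₁ = |z| + |w|` is convex in `F`, so `(F, δ) ↦ λ₁(F)² / δ`
(a perspective of `x ↦ x²`) is convex on `δ > 0`; composing with the convex nondecreasing
`s ↦ h (max s 1)` and extending by `+∞` to `δ ≤ 0` gives the convex `P`.
-/

open Matrix Set

noncomputable section

abbrev Mat2 : Type := Matrix (Fin 2) (Fin 2) ℝ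

def SO2 : Set Mat2 := {Q : Mat2 | Qᵀ * Q = 1 ∧ Q.det = 1}

def Polyconvex (W : Mat2 → ℝ) : Prop :=
  ∃ P : Mat2 × ℝ → EReal,
    (∀ x y : Mat2 × ℝ, ∀ a b : ℝ, 0 ≤ a → 0 ≤ b → a + b = 1 →
      P (a • x + b • y) ≤ (a : EReal) * P x + (b : EReal) * P y) ∧
    (∀ F : Mat2, 0 < F.det → (W F : EReal) = P (F, F.det))

def RankOneConvex (W : Mat2 → ℝ) : Prop :=
  ∀ F : Mat2, 0 < F.det → ∀ ξ η : Fin 2 → ℝ, ∀ θ : ℝ, θ ∈ Set.Icc (0:ℝ) 1 →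
    (∀ t ∈ Set.Icc (0:ℝ) 1, 0 < (F + t • vecMulVec ξ η).det) →
    W (F + (1 - θ) • vecMulVec ξ η) ≤ θ * W F + (1 - θ) * W (F + vecMulVec ξ η)

def ObjectiveIsotropic (W : Mat2 → ℝ) : Prop :=
  ∀ F : Mat2, 0 < F.det → ∀ Q₁ Q₂ : Mat2, Q₁ ∈ SO2 → Q₂ ∈ SO2 →
    W (Q₁ * F * Q₂) = W F

def Isochoric (W : Mat2 → ℝ) : Prop :=
  ∀ F : Mat2, 0 < F.det → ∀ a : ℝ, 0 < a → W (a • F) = W F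

def diag2 (a b : ℝ) : Mat2 := !![a, 0; 0, b]

def frobSq (F : Mat2) : ℝ := ∑ i, ∑ j, (F i j) ^ 2

def opNorm2 (F : Mat2) : ℝ :=
  sSup {r : ℝ | ∃ x : Fin 2 → ℝ, (x 0) ^ 2 + (x 1) ^ 2 = 1 ∧
    r = Real.sqrt ((F.mulVec x 0) ^ 2 + (F.mulVec x 1) ^ 2)}

section ConvexAnalysis

variable {E : Type*} [AddCommGroup E] [Module ℝ E]

theorem ConvexOn.monotoneOn_Ici_of_le {f : ℝ → ℝ} {a : ℝ} (hf : ConvexOn ℝ (Ici a) f)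
    (hmin : ∀ t, a ≤ t → f a ≤ f t) : MonotoneOn f (Ici a) := by
  intro s hs t ht hst
  rcases (mem_Ici.1 hs).eq_or_lt with rfl | has
  · exact hmin t ht
  · exact hf.le_right_of_left_le'' self_mem_Ici ht has hst (hmin s hs)

theorem ConvexOn.apply_one_le_of_apply_inv_eq {f : ℝ → ℝ} (hf : ConvexOn ℝ (Ioi 0) f)
    {t : ℝ} (ht : 0 < t) (hinv : f t⁻¹ = f t) : f 1 ≤ f t := by
  have hcomb : (t / (t + 1)) • t⁻¹ + (1 / (t + 1)) • t = 1 := by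
    simp only [smul_eq_mul]; field_simp; ring
  calc f 1 = f ((t / (t + 1)) • t⁻¹ + (1 / (t + 1)) • t) := by rw [hcomb]
    _ ≤ (t / (t + 1)) • f t⁻¹ + (1 / (t + 1)) • f t :=
        hf.2 (inv_pos.2 ht) ht (by positivity) (by positivity) (by field_simp)
    _ = f t := by simp only [smul_eq_mul, hinv]; field_simp

theorem ConvexOn.comp_of_monotone {s : Set E} {f : E → ℝ} {g : ℝ → ℝ} (hg : ConvexOn ℝ univ g)
    (hg' : Monotone g) (hf : ConvexOn ℝ s f) :
    ConvexOn ℝ s (g ∘ f) :=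
  ⟨hf.1, fun _ hx _ hy _ _ ha hb hab =>
    (hg' (hf.2 hx hy ha hb hab)).trans (hg.2 trivial trivial ha hb hab)⟩

theorem convexOn_apply_max_one {h : ℝ → ℝ} (hc : ConvexOn ℝ (Ici 1) h)
    (hm : MonotoneOn h (Ici 1)) : ConvexOn ℝ univ (fun s => h (max s 1)) := by
  have hrange : (fun s : ℝ => max s 1) '' univ = Ici 1 := by
    ext t
    refine ⟨fun ⟨s, _, hs⟩ => hs ▸ le_max_right s 1, fun ht => ⟨t, trivial, max_eq_left ht⟩⟩
  exact (hrange ▸ hc).comp (convexOn_id convex_univ |>.sup (convexOn_const 1 convex_univ))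
    (hrange ▸ hm)

theorem monotone_apply_max_one {h : ℝ → ℝ} (hm : MonotoneOn h (Ici 1)) :
    Monotone (fun s => h (max s 1)) :=
  fun _ _ hst => hm (mem_Ici.2 (le_max_right _ _)) (mem_Ici.2 (le_max_right _ _))
    (max_le_max_right 1 hst)

theorem sq_div_convex_comb_le {x y d e a b : ℝ} (hd : 0 < d) (he : 0 < e) (ha : 0 ≤ a)
    (hb : 0 ≤ b) (hab : a + b = 1) :
    (a * x + b * y) ^ 2 / (a * d + b * e) ≤ a * (x ^ 2 / d) + b * (y ^ 2 / e) := by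
  have hde : 0 < a * d + b * e := convex_Ioi (0 : ℝ) hd he ha hb hab
  rw [div_le_iff₀ hde]
  have key : a * (x ^ 2 / d) + b * (y ^ 2 / e) = (a * x ^ 2 * e + b * y ^ 2 * d) / (d * e) := by
    field_simp
  rw [key, div_mul_eq_mul_div, le_div_iff₀ (by positivity)]
  nlinarith [mul_nonneg (mul_nonneg ha hb) (sq_nonneg (x * e - y * d))]

theorem convexOn_sq_div {n : E → ℝ}
    (hn : ConvexOn ℝ univ n) (hn0 : ∀ x, 0 ≤ n x) :
    ConvexOn ℝ {p : E × ℝ | 0 < p.2} (fun p => n p.1 ^ 2 / p.2) := by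
  have hconv : Convex ℝ {p : E × ℝ | 0 < p.2} :=
    (convex_Ioi 0).linear_preimage (LinearMap.snd ℝ E ℝ)
  refine ⟨hconv, fun p hp q hq a b ha hb hab => ?_⟩
  have hde : 0 < a * p.2 + b * q.2 := hconv hp hq ha hb hab
  calc n (a • p.1 + b • q.1) ^ 2 / (a * p.2 + b * q.2)
      ≤ (a * n p.1 + b * n q.1) ^ 2 / (a * p.2 + b * q.2) := by
        gcongr
        · exact hn0 _
        · exact hn.2 trivial trivial ha hb hab
    _ ≤ a * (n p.1 ^ 2 / p.2) + b * (n q.1 ^ 2 / q.2) := sq_div_convex_comb_le hp hq ha hb hab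

end ConvexAnalysis

section ConformalDecomposition

/-- With `z = conformalPart F` and `w = anticonformalPart F`, `F` acts on `ℂ ≅ ℝ²` as
`u ↦ z * u + w * conj u` (`eq_mulMatrix_add_conjMulMatrix`). -/
def conformalPart : Mat2 →ₗ[ℝ] ℂ where
  toFun F := ⟨(F 0 0 + F 1 1) / 2, (F 1 0 - F 0 1) / 2⟩
  map_add' F G := by apply Complex.ext <;> simp <;> ring
  map_smul' c F := by apply Complex.ext <;> simp <;> ring

def anticonformalPart : Mat2 →ₗ[ℝ] ℂ where
  toFun F := ⟨(F 0 0 - F 1 1) / 2, (F 0 1 + F 1 0) / 2⟩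
  map_add' F G := by apply Complex.ext <;> simp <;> ring
  map_smul' c F := by apply Complex.ext <;> simp <;> ring

def mulMatrix (z : ℂ) : Mat2 := !![z.re, -z.im; z.im, z.re]

def conjMulMatrix (w : ℂ) : Mat2 := !![w.re, w.im; w.im, -w.re]

theorem eq_mulMatrix_add_conjMulMatrix (F : Mat2) :
    F = mulMatrix (conformalPart F) + conjMulMatrix (anticonformalPart F) := by
  ext i j
  fin_cases i <;> fin_cases j <;>
    simp [mulMatrix, conjMulMatrix, conformalPart, anticonformalPart] <;> ring

theorem mulMatrix_mul_mulMatrix (u z : ℂ) : mulMatrix u * mulMatrix z = mulMatrix (u * z) := by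
  ext i j
  fin_cases i <;> fin_cases j <;>
    simp [mulMatrix, Matrix.mul_apply, Complex.mul_re, Complex.mul_im] <;> ring

theorem mulMatrix_mul_conjMulMatrix (u w : ℂ) :
    mulMatrix u * conjMulMatrix w = conjMulMatrix (u * w) := by
  ext i j
  fin_cases i <;> fin_cases j <;>
    simp [mulMatrix, conjMulMatrix, Matrix.mul_apply, Complex.mul_re, Complex.mul_im] <;> ring

theorem conjMulMatrix_mul_mulMatrix (w v : ℂ) :
    conjMulMatrix w * mulMatrix v = conjMulMatrix (w * starRingEnd ℂ v) := by
  ext i j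
  fin_cases i <;> fin_cases j <;>
    simp [mulMatrix, conjMulMatrix, Matrix.mul_apply, Complex.mul_re, Complex.mul_im]
  ring

theorem mulMatrix_mem_SO2 {u : ℂ} (hu : ‖u‖ = 1) : mulMatrix u ∈ SO2 := by
  have h : u.re ^ 2 + u.im ^ 2 = 1 := by
    have := Complex.sq_norm u
    rw [hu, Complex.normSq_apply] at this
    linear_combination -this
  refine ⟨?_, ?_⟩
  · ext i j
    fin_cases i <;> fin_cases j <;>
      simp [mulMatrix, Matrix.mul_apply] <;> first | ring1 | linear_combination h
  · simp [mulMatrix, Matrix.det_fin_two_of]; linear_combination h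

theorem det_eq_norm_sq_sub_norm_sq (F : Mat2) :
    F.det = ‖conformalPart F‖ ^ 2 - ‖anticonformalPart F‖ ^ 2 := by
  simp only [Matrix.det_fin_two, Complex.sq_norm, Complex.normSq_apply, conformalPart,
    anticonformalPart, LinearMap.coe_mk, AddHom.coe_mk]
  ring

theorem exists_mem_SO2_mul_mul_eq_diag2 (F : Mat2) :
    ∃ Q₁ ∈ SO2, ∃ Q₂ ∈ SO2, Q₁ * F * Q₂ = diag2 (‖conformalPart F‖ + ‖anticonformalPart F‖)
      (‖conformalPart F‖ - ‖anticonformalPart F‖) := by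
  have hF := eq_mulMatrix_add_conjMulMatrix F
  set z := conformalPart F
  set w := anticonformalPart F
  let e : ℝ → ℂ := fun θ => Complex.exp (θ * Complex.I)
  have he_mul (α β : ℝ) : e α * e β = e (α + β) := by
    simp only [e, ← Complex.exp_add]; push_cast; ring_nf
  have he_conj (α : ℝ) : starRingEnd ℂ (e α) = e (-α) := by
    simp only [e, ← Complex.exp_conj, map_mul, Complex.conj_ofReal, Complex.conj_I]
    push_cast; ring_nf
  have he_zero : e 0 = 1 := by simp [e]
  have hpolar (c : ℂ) : ‖c‖ * e c.arg = c := Complex.norm_mul_exp_arg_mul_I c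
  -- `u`, `v` rotate by the angles that turn both `z` and `w` into nonnegative reals
  set u := e (-(z.arg + w.arg) / 2)
  set v := e ((w.arg - z.arg) / 2)
  have hz : u * z * v = ‖z‖ := by
    conv_lhs => rw [← hpolar z]
    rw [show u * (‖z‖ * e z.arg) * v = ‖z‖ * (u * e z.arg * v) by ring, he_mul, he_mul,
      show -(z.arg + w.arg) / 2 + z.arg + (w.arg - z.arg) / 2 = 0 by ring, he_zero, mul_one]
  have hw : u * w * starRingEnd ℂ v = ‖w‖ := by
    conv_lhs => rw [← hpolar w]
    rw [show u * (‖w‖ * e w.arg) * starRingEnd ℂ v = ‖w‖ * (u * e w.arg * starRingEnd ℂ v) by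
        ring, he_conj, he_mul, he_mul,
      show -(z.arg + w.arg) / 2 + w.arg + -((w.arg - z.arg) / 2) = 0 by ring, he_zero, mul_one]
  refine ⟨mulMatrix u, mulMatrix_mem_SO2 (Complex.norm_exp_ofReal_mul_I _), mulMatrix v,
    mulMatrix_mem_SO2 (Complex.norm_exp_ofReal_mul_I _), ?_⟩
  rw [hF, mul_add, add_mul, mulMatrix_mul_mulMatrix, mulMatrix_mul_conjMulMatrix,
    conjMulMatrix_mul_mulMatrix, mulMatrix_mul_mulMatrix, hz, hw]
  ext i j
  fin_cases i <;> fin_cases j <;> simp [mulMatrix, conjMulMatrix, diag2, sub_eq_add_neg]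

/-- The larger singular value of `F`, by `exists_mem_SO2_mul_mul_eq_diag2`. -/
def maxStretch (F : Mat2) : ℝ := ‖conformalPart F‖ + ‖anticonformalPart F‖

theorem maxStretch_nonneg (F : Mat2) : 0 ≤ maxStretch F := by
  unfold maxStretch; positivity

theorem convexOn_maxStretch : ConvexOn ℝ univ maxStretch :=
  ((convexOn_norm convex_univ).comp_linearMap conformalPart).add
    ((convexOn_norm convex_univ).comp_linearMap anticonformalPart)

theorem one_le_maxStretch_sq_div_det {F : Mat2} (hF : 0 < F.det) :
    1 ≤ maxStretch F ^ 2 / F.det := by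
  rw [le_div_iff₀ hF, one_mul, det_eq_norm_sq_sub_norm_sq, maxStretch]
  nlinarith [norm_nonneg (conformalPart F), norm_nonneg (anticonformalPart F)]

end ConformalDecomposition

theorem det_diag2 (a b : ℝ) : (diag2 a b).det = a * b := by
  simp [diag2, Matrix.det_fin_two_of]

section Invariance

variable {W : Mat2 → ℝ}

theorem Isochoric.apply_diag2 (hIso : Isochoric W) {a b : ℝ} (ha : 0 < a) (hb : 0 < b) :
    W (diag2 a b) = W (diag2 (a / b) 1) := by
  have hscale : diag2 a b = b • diag2 (a / b) 1 := by
    ext i j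
    fin_cases i <;> fin_cases j <;> simp [diag2]
    field_simp
  rw [hscale, hIso _ (by rw [det_diag2]; positivity) b hb]

theorem ObjectiveIsotropic.apply_diag2_swap (hOI : ObjectiveIsotropic W) {a b : ℝ}
    (hab : 0 < a * b) : W (diag2 a b) = W (diag2 b a) := by
  have hrot : mulMatrix Complex.I * diag2 a b * mulMatrix (-Complex.I) = diag2 b a := by
    ext i j
    fin_cases i <;> fin_cases j <;> simp [mulMatrix, diag2, Matrix.mul_apply]
  rw [← hrot, hOI _ (by rwa [det_diag2]) _ _ (mulMatrix_mem_SO2 (by simp))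
    (mulMatrix_mem_SO2 (by simp))]

theorem apply_diag2_inv (hOI : ObjectiveIsotropic W) (hIso : Isochoric W) {t : ℝ} (ht : 0 < t) :
    W (diag2 t⁻¹ 1) = W (diag2 t 1) := by
  rw [hOI.apply_diag2_swap (by positivity), hIso.apply_diag2 one_pos (inv_pos.2 ht), one_div,
    inv_inv]

theorem apply_eq_apply_diag2_maxStretch (hOI : ObjectiveIsotropic W) (hIso : Isochoric W)
    {F : Mat2} (hF : 0 < F.det) : W F = W (diag2 (maxStretch F ^ 2 / F.det) 1) := by
  obtain ⟨Q₁, hQ₁, Q₂, hQ₂, hdiag⟩ := exists_mem_SO2_mul_mul_eq_diag2 F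
  have hdet := det_eq_norm_sq_sub_norm_sq F
  set A := ‖conformalPart F‖
  set B := ‖anticonformalPart F‖
  have hA : 0 ≤ A := norm_nonneg _
  have hB : 0 ≤ B := norm_nonneg _
  have hAB : 0 < A - B := by nlinarith
  have hN : maxStretch F = A + B := rfl
  rw [← hOI F hF Q₁ Q₂ hQ₁ hQ₂, hdiag, hIso.apply_diag2 (by linarith) hAB, hN, hdet]
  congr 2
  rw [div_eq_div_iff hAB.ne' (hdet ▸ hF.ne')]
  ring

end Invariance

section ExtendByTop

variable {E : Type*} [AddCommGroup E] [Module ℝ E]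

open Classical in
def extendTop (s : Set E) (f : E → ℝ) (x : E) : EReal := if x ∈ s then f x else ⊤

theorem ConvexOn.extendTop_le {s : Set E} {f : E → ℝ} (hf : ConvexOn ℝ s f) {x y : E}
    {a b : ℝ} (ha : 0 ≤ a) (hb : 0 ≤ b) (hab : a + b = 1) :
    extendTop s f (a • x + b • y) ≤ a * extendTop s f x + b * extendTop s f y := by
  rcases ha.eq_or_lt with rfl | ha'
  · obtain rfl : b = 1 := by linarith
    simp
  rcases hb.eq_or_lt with rfl | hb'
  · obtain rfl : a = 1 := by linarith
    simp
  unfold extendTop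
  split_ifs with hxy hx hy hy hx hy hy
  · exact_mod_cast hf.2 hx hy ha hb hab
  all_goals first
    | exact absurd (hf.1 hx hy ha hb hab) hxy
    | simp [EReal.coe_mul_top_of_pos, ha', hb', ← EReal.coe_mul]

theorem polyconvex_of_convexOn {W : Mat2 → ℝ} {Φ : Mat2 × ℝ → ℝ}
    (hΦ : ConvexOn ℝ {p | 0 < p.2} Φ) (hW : ∀ F : Mat2, 0 < F.det → W F = Φ (F, F.det)) :
    Polyconvex W :=
  ⟨extendTop _ Φ, fun _ _ _ _ ha hb hab => hΦ.extendTop_le ha hb hab,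
    fun F hF => by simp [extendTop, hF, hW F hF]⟩

end ExtendByTop

theorem det_add_smul_vecMulVec (F : Mat2) (ξ η : Fin 2 → ℝ) (s : ℝ) :
    (F + s • vecMulVec ξ η).det = (1 - s) * F.det + s * (F + vecMulVec ξ η).det := by
  simp only [det_fin_two, Matrix.add_apply, Matrix.smul_apply, vecMulVec_apply, smul_eq_mul]
  ring

section Implications

variable {W : Mat2 → ℝ}

theorem Polyconvex.rankOneConvex (hW : Polyconvex W) : RankOneConvex W := by
  obtain ⟨P, hP, hPW⟩ := hW
  intro F hF ξ η θ hθ hpos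
  set R := vecMulVec ξ η
  have hθ' : 1 - θ ∈ Icc (0 : ℝ) 1 := ⟨by linarith [hθ.2], by linarith [hθ.1]⟩
  have hend : 0 < (F + R).det := by simpa using hpos 1 (right_mem_Icc.2 zero_le_one)
  have hcomb : θ • (F, F.det) + (1 - θ) • (F + R, (F + R).det) =
      (F + (1 - θ) • R, (F + (1 - θ) • R).det) := by
    rw [det_add_smul_vecMulVec]
    ext : 1
    · simp only [Prod.fst_add, Prod.smul_fst]; module
    · simp only [Prod.snd_add, Prod.smul_snd, smul_eq_mul]; ring
  have h := hP (F, F.det) (F + R, (F + R).det) θ (1 - θ) hθ.1 hθ'.1 (by ring)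
  rw [hcomb, ← hPW _ hF, ← hPW _ hend, ← hPW _ (hpos _ hθ')] at h
  exact_mod_cast h

theorem RankOneConvex.convexOn_diag2 (hW : RankOneConvex W) :
    ConvexOn ℝ (Ioi 0) (fun t => W (diag2 t 1)) := by
  refine ⟨convex_Ioi 0, fun x hx y hy a b ha hb hab => ?_⟩
  obtain rfl : b = 1 - a := by linarith
  have hline (s : ℝ) :
      diag2 x 1 + s • vecMulVec ![y - x, 0] ![1, 0] = diag2 ((1 - s) * x + s * y) 1 := by
    ext i j
    fin_cases i <;> fin_cases j <;> simp [diag2]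
    ring
  have hpos : ∀ s ∈ Icc (0 : ℝ) 1, 0 < (diag2 x 1 + s • vecMulVec ![y - x, 0] ![1, 0]).det := by
    intro s hs
    rw [hline, det_diag2, mul_one]
    exact convex_Ioi 0 hx hy (sub_nonneg.2 hs.2) hs.1 (by ring)
  have h := hW (diag2 x 1) (by simpa [det_diag2] using hx) _ _ a ⟨ha, by linarith⟩ hpos
  have hend := hline 1
  rw [one_smul] at hend
  rw [hline, hend] at h
  simpa using h

theorem convexOn_diag2_Ici_and_monotoneOn (hOI : ObjectiveIsotropic W) (hIso : Isochoric W)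
    (hc : ConvexOn ℝ (Ioi 0) (fun t => W (diag2 t 1))) :
    ConvexOn ℝ (Ici 1) (fun t => W (diag2 t 1)) ∧
      MonotoneOn (fun t => W (diag2 t 1)) (Ici 1) := by
  have hc₁ := hc.subset (fun t ht => one_pos.trans_le ht) (convex_Ici 1)
  refine ⟨hc₁, hc₁.monotoneOn_Ici_of_le fun t ht => ?_⟩
  have ht₀ : 0 < t := one_pos.trans_le ht
  exact hc.apply_one_le_of_apply_inv_eq ht₀ (apply_diag2_inv hOI hIso ht₀)

theorem polyconvex_of_convexOn_Ici (hOI : ObjectiveIsotropic W) (hIso : Isochoric W)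
    (hc : ConvexOn ℝ (Ici 1) (fun t => W (diag2 t 1)))
    (hm : MonotoneOn (fun t => W (diag2 t 1)) (Ici 1)) : Polyconvex W := by
  refine polyconvex_of_convexOn ((convexOn_apply_max_one hc hm).comp_of_monotone
    (monotone_apply_max_one hm) (convexOn_sq_div convexOn_maxStretch maxStretch_nonneg))
    fun F hF => ?_
  simp only [Function.comp_apply, max_eq_left (one_le_maxStretch_sq_div_det hF)]
  exact apply_eq_apply_diag2_maxStretch hOI hIso hF

end Implications

/-- main equivalence theorem for objective, isotropic, isochoric `W`,
with `h(t) = W(diag(t,1))`. -/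
theorem isochoric_main_tfae (W : Mat2 → ℝ)
    (hOI : ObjectiveIsotropic W) (hIso : Isochoric W) :
    List.TFAE
      [Polyconvex W,
       RankOneConvex W,
       ConvexOn ℝ (Set.Ioi (0:ℝ)) (fun t => W (diag2 t 1)),
       ConvexOn ℝ (Set.Ici (1:ℝ)) (fun t => W (diag2 t 1)) ∧
         MonotoneOn (fun t => W (diag2 t 1)) (Set.Ici (1:ℝ))] := by
  tfae_have 1 → 2 := Polyconvex.rankOneConvex
  tfae_have 2 → 3 := RankOneConvex.convexOn_diag2
  tfae_have 3 → 4 := convexOn_diag2_Ici_and_monotoneOn hOI hIso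
  tfae_have 4 → 1 := fun h => polyconvex_of_convexOn_Ici hOI hIso h.1 h.2
  tfae_finish
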